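/- arXiv:1709.00589 — 3 statements merged into one kernel-verified Lean document; each statement's English description precedes it below -/
import Mathlib

section
/- For every finite simple graph G on n ≥ 1 vertices and every integer r ≥ 2, the r-ASC index of G satisfies θ_r(G) ≤ 2r. -/
/-!
Attach a path `z₀ ⋯ z_{2r-1}` to `G`, joining every vertex of `G` to `z₀` and `z_{2r-2}`.
With `V` collapsed to a point, `z₀ ⋯ z_{2r-2}` closes into a cycle of length `2r` and `z_{2r-1}`
is a pendant vertex on it. Walks along the cycle bound every distance by `r`, except the one
between the pendant and `z_{r-2}`, the vertex antipodal to its neighbour. Lower bounds come from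
potentials that change by at most one along an edge: the cyclic distance of positions gives every
vertex eccentricity at least `r`, and the distance to the pendant separates `z_{r-2}` from it by
`r + 1`. So exactly these two vertices are not central, while `G` stays induced.
-/

namespace AscPaper

open SimpleGraph

/-- The eccentricity of a vertex `u` in a graph `G`, as an extended natural number:
the supremum of distances from `u` to all vertices. -/
noncomputable def ecc {V : Type*} (G : SimpleGraph V) (u : V) : ℕ∞ :=
  ⨆ v, G.edist u v

/-- The radius of a graph: the minimum eccentricity over all vertices. -/
noncomputable def graphRadius {V : Type*} (G : SimpleGraph V) : ℕ∞ :=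
  ⨅ u, ecc G u

/-- The diameter of a graph: the maximum eccentricity over all vertices. -/
noncomputable def graphDiam {V : Type*} (G : SimpleGraph V) : ℕ∞ :=
  ⨆ u, ecc G u

/-- The eccentric set of `u`: all vertices at distance exactly `ecc G u` from `u`. -/
def eccSet {V : Type*} (G : SimpleGraph V) (u : V) : Set V :=
  {v | G.edist u v = ecc G u}

/-- `H` is an `r`-ASC (almost self-centered) graph: `H` is connected, has radius `r`,
and all but exactly two vertices are central (have eccentricity equal to the radius). -/
def IsASC {V : Type*} (r : ℕ) (H : SimpleGraph V) : Prop :=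
  H.Connected ∧ graphRadius H = (r : ℕ∞) ∧
    {u : V | ecc H u ≠ graphRadius H}.ncard = 2

/-- The `r`-ASC index of a graph `G`: the minimum number `k` of vertices that need to be
added to `G` so that the resulting graph is an `r`-ASC graph containing `G` as an
induced subgraph. -/
noncomputable def theta {V : Type*} (r : ℕ) (G : SimpleGraph V) : ℕ :=
  sInf {k : ℕ | ∃ H : SimpleGraph (V ⊕ Fin k), IsASC r H ∧
    ∀ u v : V, H.Adj (Sum.inl u) (Sum.inl v) ↔ G.Adj u v}

theorem le_add_edist_of_lipschitz {W : Type*} {H : SimpleGraph W} (f : W → ℕ)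
    (hf : ∀ a b, H.Adj a b → f a ≤ f b + 1) (x y : W) :
    (f x : ℕ∞) ≤ f y + H.edist x y := by
  rcases eq_or_ne (H.edist x y) ⊤ with h | h
  · simp [h]
  obtain ⟨p, hp⟩ := exists_walk_of_edist_ne_top h
  have walk_bound : ∀ {a b : W} (q : H.Walk a b), f a ≤ f b + q.length := by
    intro a b q
    induction q with
    | nil => simp
    | cons hadj _ ih =>
      have := hf _ _ hadj
      rw [Walk.length_cons]
      omega
  rw [← hp]
  exact_mod_cast walk_bound p

theorem edist_le_ecc {W : Type*} (H : SimpleGraph W) (u v : W) : H.edist u v ≤ ecc H u :=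
  le_iSup (fun v ↦ H.edist u v) v

def cycDist (n a b : ℕ) : ℕ := min (Nat.dist a b) (n - Nat.dist a b)

theorem cycDist_two_mul_le (r a b : ℕ) : cycDist (2 * r) a b ≤ r := by
  simp only [cycDist, Nat.dist]; omega

theorem exists_cycDist_eq {r p : ℕ} (hp : p < 2 * r) :
    ∃ q < 2 * r, cycDist (2 * r) p q = r := by
  by_cases h : p < r
  · exact ⟨p + r, by omega, by simp only [cycDist, Nat.dist]; omega⟩
  · exact ⟨p - r, by omega, by simp only [cycDist, Nat.dist]; omega⟩

section Construction

open Sum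

variable {V : Type*}

def ascExtension (G : SimpleGraph V) (r : ℕ) : SimpleGraph (V ⊕ Fin (2 * r)) where
  Adj
    | inl u, inl v => G.Adj u v
    | inl _, inr k | inr k, inl _ => (k : ℕ) = 0 ∨ (k : ℕ) = 2 * r - 2
    | inr k, inr l => (k : ℕ) + 1 = l ∨ (l : ℕ) + 1 = k
  symm := by
    constructor
    rintro (u | k) (v | l) h
    · exact G.adj_symm h
    · exact h
    · exact h
    · exact h.symm
  loopless := by
    constructor
    rintro (u | k) h
    · exact G.loopless.irrefl u h
    · omega

def pendant (r : ℕ) [NeZero r] : V ⊕ Fin (2 * r) :=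
  inr ⟨2 * r - 1, by have := NeZero.pos r; omega⟩

/-- Position `i ≤ 2r` on the cycle through `inl v`: both `0` and `2r` give `inl v`. -/
def cycleVertex (r : ℕ) (v : V) (i : ℕ) : V ⊕ Fin (2 * r) :=
  if h : 0 < i ∧ i < 2 * r then inr ⟨i - 1, by omega⟩ else inl v

/-- The pendant shares the position `2r - 1` of its neighbour `z_{2r-2}`. -/
def position (r : ℕ) : V ⊕ Fin (2 * r) → ℕ
  | inl _ => 0
  | inr k => min (k + 1) (2 * r - 1)

/-- The distance to the pendant vertex. -/
def pendantPotential (r : ℕ) : V ⊕ Fin (2 * r) → ℕ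
  | inl _ => 2
  | inr k => min (2 * r - 1 - k) (k + 3)

variable {G : SimpleGraph V} {r : ℕ}

theorem cycleVertex_zero (v : V) : cycleVertex r v 0 = inl v := by
  simp [cycleVertex]

theorem cycleVertex_two_mul (v : V) : cycleVertex r v (2 * r) = inl v := by
  simp [cycleVertex]

theorem cycleVertex_succ (v : V) (k : Fin (2 * r)) (hk : (k : ℕ) + 1 < 2 * r) :
    cycleVertex r v (k + 1) = inr k := by
  simp [cycleVertex, hk]

theorem cycleVertex_eq_cycleVertex (v w : V) {i : ℕ} (h0 : 0 < i) (hi : i < 2 * r) :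
    cycleVertex r v i = cycleVertex r w i := by
  simp [cycleVertex, h0, hi]

theorem position_cycleVertex (v : V) {i : ℕ} (hi : i < 2 * r) :
    position r (cycleVertex r v i) = i := by
  unfold cycleVertex
  split_ifs <;> simp only [position] <;> omega

theorem adj_cycleVertex_succ (v : V) {i : ℕ} (hi : i < 2 * r) :
    (ascExtension G r).Adj (cycleVertex r v i) (cycleVertex r v (i + 1)) := by
  unfold cycleVertex
  split_ifs <;> simp only [ascExtension] <;> omega

theorem edist_cycleVertex_le_sub (v : V) {i j : ℕ} (hij : i ≤ j) (hj : j ≤ 2 * r) :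
    (ascExtension G r).edist (cycleVertex r v i) (cycleVertex r v j) ≤ (j - i : ℕ) := by
  obtain ⟨d, rfl⟩ := Nat.exists_eq_add_of_le hij
  induction d with
  | zero => simp
  | succ d ih =>
    calc (ascExtension G r).edist (cycleVertex r v i) (cycleVertex r v (i + (d + 1)))
        ≤ (ascExtension G r).edist (cycleVertex r v i) (cycleVertex r v (i + d)) +
          (ascExtension G r).edist (cycleVertex r v (i + d)) (cycleVertex r v (i + d + 1)) :=
          (ascExtension G r).edist_triangle
      _ ≤ (d : ℕ∞) + 1 := by
          gcongr
          · simpa using ih (by omega) (by omega)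
          · exact ((edist_eq_one_iff_adj).2 (adj_cycleVertex_succ v (by omega))).le
      _ = ((i + (d + 1) - i : ℕ) : ℕ∞) := by rw [Nat.add_sub_cancel_left]; push_cast; rfl

theorem edist_cycleVertex_le_cycDist (v : V) {i j : ℕ} (hi : i ≤ 2 * r) (hj : j ≤ 2 * r) :
    (ascExtension G r).edist (cycleVertex r v i) (cycleVertex r v j) ≤ cycDist (2 * r) i j := by
  wlog hij : i ≤ j generalizing i j
  · rw [edist_comm, cycDist, Nat.dist_comm]
    exact this hj hi (by omega)
  have along : (ascExtension G r).edist (cycleVertex r v i) (cycleVertex r v j) ≤ (j - i : ℕ) :=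
    edist_cycleVertex_le_sub v hij hj
  have around : (ascExtension G r).edist (cycleVertex r v i) (cycleVertex r v j) ≤
      (i + (2 * r - j) : ℕ) := by
    calc (ascExtension G r).edist (cycleVertex r v i) (cycleVertex r v j)
        ≤ (ascExtension G r).edist (cycleVertex r v i) (cycleVertex r v 0) +
          (ascExtension G r).edist (cycleVertex r v (2 * r)) (cycleVertex r v j) := by
          rw [cycleVertex_zero, cycleVertex_two_mul]
          exact (ascExtension G r).edist_triangle
      _ ≤ (i - 0 : ℕ) + (2 * r - j : ℕ) := by
          rw [edist_comm, edist_comm (u := cycleVertex r v (2 * r))]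
          gcongr
          · exact edist_cycleVertex_le_sub v (Nat.zero_le i) hi
          · exact edist_cycleVertex_le_sub v hj le_rfl
      _ = (i + (2 * r - j) : ℕ) := by push_cast; simp
  have hcyc : cycDist (2 * r) i j = min (j - i) (i + (2 * r - j)) := by
    simp only [cycDist, Nat.dist]; omega
  rw [hcyc, Nat.mono_cast.map_min]
  exact le_min along around

theorem cycDist_position_le_of_adj {a b : V ⊕ Fin (2 * r)} (h : (ascExtension G r).Adj a b)
    (t : ℕ) (ht : t < 2 * r) :
    cycDist (2 * r) (position r a) t ≤ cycDist (2 * r) (position r b) t + 1 := by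
  rcases a with u | k <;> rcases b with v | l <;>
    simp only [ascExtension] at h <;> simp only [position, cycDist, Nat.dist] <;> omega

theorem position_lt [NeZero r] (x : V ⊕ Fin (2 * r)) : position r x < 2 * r := by
  have := NeZero.pos r
  rcases x with u | k <;> simp only [position] <;> omega

theorem cycDist_position_le_edist [NeZero r] (x y : V ⊕ Fin (2 * r)) :
    (cycDist (2 * r) (position r x) (position r y) : ℕ∞) ≤ (ascExtension G r).edist x y := by
  simpa [cycDist] using
    le_add_edist_of_lipschitz (fun w ↦ cycDist (2 * r) (position r w) (position r y))
      (fun _ _ h ↦ cycDist_position_le_of_adj h _ (position_lt y)) x y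

theorem pendantPotential_le_of_adj {a b : V ⊕ Fin (2 * r)} (h : (ascExtension G r).Adj a b) :
    pendantPotential r a ≤ pendantPotential r b + 1 := by
  rcases a with u | k <;> rcases b with v | l <;>
    simp only [ascExtension] at h <;> simp only [pendantPotential] <;> omega

theorem adj_cycleVertex_pendant [NeZero r] (v : V) :
    (ascExtension G r).Adj (cycleVertex r v (2 * r - 1)) (pendant r) := by
  have := NeZero.pos r
  unfold cycleVertex
  split_ifs
  · simp only [ascExtension, pendant]; omega
  · omega

theorem edist_cycleVertex_pendant_le [NeZero r] (v : V) {i : ℕ} (hi : i ≤ 2 * r) :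
    (ascExtension G r).edist (cycleVertex r v i) (pendant r) ≤
      cycDist (2 * r) i (2 * r - 1) + 1 :=
  calc (ascExtension G r).edist (cycleVertex r v i) (pendant r)
      ≤ (ascExtension G r).edist (cycleVertex r v i) (cycleVertex r v (2 * r - 1)) +
        (ascExtension G r).edist (cycleVertex r v (2 * r - 1)) (pendant r) :=
        (ascExtension G r).edist_triangle
    _ ≤ cycDist (2 * r) i (2 * r - 1) + 1 := by
        gcongr
        · exact edist_cycleVertex_le_cycDist v hi (by omega)
        · exact ((edist_eq_one_iff_adj).2 (adj_cycleVertex_pendant v)).le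

theorem succ_le_edist_pendant [NeZero r] (hr : 2 ≤ r) {k : Fin (2 * r)} (hk : (k : ℕ) = r - 2) :
    ((r + 1 : ℕ) : ℕ∞) ≤ (ascExtension G r).edist (inr k) (pendant r) := by
  have h := le_add_edist_of_lipschitz (H := ascExtension G r) (pendantPotential r)
    (fun _ _ ↦ pendantPotential_le_of_adj) (inr k) (pendant r)
  have hk' : pendantPotential r (inr k : V ⊕ Fin (2 * r)) = r + 1 := by
    simp only [pendantPotential]; omega
  have hpendant : pendantPotential r (pendant r : V ⊕ Fin (2 * r)) = 0 := by
    simp [pendantPotential, pendant]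
  rw [hk', hpendant] at h
  simpa using h

theorem eq_inl_or_cycleVertex_or_pendant [NeZero r] (x : V ⊕ Fin (2 * r)) :
    (∃ w, x = inl w) ∨ (∃ i, 0 < i ∧ i < 2 * r ∧ ∀ v, cycleVertex r v i = x) ∨
      x = pendant r := by
  rcases x with w | k
  · exact Or.inl ⟨w, rfl⟩
  · by_cases hk : (k : ℕ) + 1 < 2 * r
    · exact Or.inr (Or.inl ⟨k + 1, by omega, hk, fun v ↦ cycleVertex_succ v k hk⟩)
    · exact Or.inr (Or.inr (congrArg inr (Fin.ext (by simp; omega))))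

theorem edist_inl_le [NeZero r] (hr : 2 ≤ r) (v : V) (y : V ⊕ Fin (2 * r)) :
    (ascExtension G r).edist (inl v) y ≤ r := by
  rw [← cycleVertex_zero (r := r) v]
  rcases eq_inl_or_cycleVertex_or_pendant y with ⟨w, rfl⟩ | ⟨j, hj0, hj, hy⟩ | rfl
  · calc (ascExtension G r).edist (cycleVertex r v 0) (inl w)
        ≤ (ascExtension G r).edist (cycleVertex r v 0) (cycleVertex r v 1) +
          (ascExtension G r).edist (cycleVertex r w 1) (cycleVertex r w 0) := by
          rw [cycleVertex_zero w, cycleVertex_eq_cycleVertex v w (i := 1) (by omega) (by omega)]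
          exact (ascExtension G r).edist_triangle
      _ ≤ cycDist (2 * r) 0 1 + cycDist (2 * r) 1 0 := by
          gcongr <;> exact edist_cycleVertex_le_cycDist _ (by omega) (by omega)
      _ ≤ r := by
          have : cycDist (2 * r) 0 1 + cycDist (2 * r) 1 0 ≤ r := by
            simp only [cycDist, Nat.dist]; omega
          exact_mod_cast this
  · rw [← hy v]
    exact (edist_cycleVertex_le_cycDist v (by omega) hj.le).trans
      (by exact_mod_cast cycDist_two_mul_le r 0 j)
  · have : cycDist (2 * r) 0 (2 * r - 1) + 1 ≤ r := by simp only [cycDist, Nat.dist]; omega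
    exact (edist_cycleVertex_pendant_le v (by omega)).trans (by exact_mod_cast this)

theorem edist_inr_le [Nonempty V] [NeZero r] (hr : 2 ≤ r) {k : Fin (2 * r)}
    (hk : (k : ℕ) ≠ r - 2) (hk' : (k : ℕ) ≠ 2 * r - 1) (y : V ⊕ Fin (2 * r)) :
    (ascExtension G r).edist (inr k) y ≤ r := by
  obtain ⟨v⟩ := ‹Nonempty V›
  have hk_lt := k.2
  rcases eq_inl_or_cycleVertex_or_pendant y with ⟨w, rfl⟩ | ⟨j, hj0, hj, hy⟩ | rfl
  · rw [edist_comm]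
    exact edist_inl_le hr w _
  · rw [← cycleVertex_succ v k (by omega), ← hy v]
    exact (edist_cycleVertex_le_cycDist v (by omega) hj.le).trans
      (by exact_mod_cast cycDist_two_mul_le r _ j)
  · rw [← cycleVertex_succ v k (by omega)]
    have : cycDist (2 * r) (k + 1) (2 * r - 1) + 1 ≤ r := by
      simp only [cycDist, Nat.dist]; omega
    exact (edist_cycleVertex_pendant_le v (by omega)).trans (by exact_mod_cast this)

theorem le_ecc [Nonempty V] [NeZero r] (x : V ⊕ Fin (2 * r)) :
    (r : ℕ∞) ≤ ecc (ascExtension G r) x := by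
  obtain ⟨v⟩ := ‹Nonempty V›
  obtain ⟨q, hq, hxq⟩ := exists_cycDist_eq (position_lt x)
  calc (r : ℕ∞) = cycDist (2 * r) (position r x) (position r (cycleVertex r v q)) := by
        rw [position_cycleVertex v hq, hxq]
    _ ≤ (ascExtension G r).edist x (cycleVertex r v q) := cycDist_position_le_edist _ _
    _ ≤ ecc (ascExtension G r) x := edist_le_ecc _ _ _

theorem ecc_ascExtension_eq_iff [Nonempty V] [NeZero r] (hr : 2 ≤ r) (x : V ⊕ Fin (2 * r)) :
    ecc (ascExtension G r) x = r ↔ x ≠ inr ⟨r - 2, by omega⟩ ∧ x ≠ pendant r := by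
  have far_pair : ((r + 1 : ℕ) : ℕ∞) ≤
      (ascExtension G r).edist (inr ⟨r - 2, by omega⟩) (pendant r) :=
    succ_le_edist_pendant hr rfl
  constructor
  · intro hx
    have : ¬ ((r + 1 : ℕ) : ℕ∞) ≤ r := by exact_mod_cast Nat.not_succ_le_self r
    refine ⟨?_, ?_⟩ <;> rintro rfl <;> refine this (hx ▸ far_pair.trans ?_)
    · exact edist_le_ecc _ _ _
    · exact edist_comm.le.trans (edist_le_ecc _ _ _)
  · rintro ⟨hx, hx'⟩
    refine le_antisymm (iSup_le fun y ↦ ?_) (le_ecc x)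
    rcases x with v | k
    · exact edist_inl_le hr v y
    · refine edist_inr_le hr (fun hk ↦ hx ?_) (fun hk ↦ hx' ?_) y <;>
        exact congrArg inr (Fin.ext hk)

theorem graphRadius_ascExtension [Nonempty V] [NeZero r] (hr : 2 ≤ r) :
    graphRadius (ascExtension G r) = r := by
  obtain ⟨v⟩ := ‹Nonempty V›
  refine le_antisymm ?_ (le_iInf le_ecc)
  calc graphRadius (ascExtension G r) ≤ ecc (ascExtension G r) (inl v) := iInf_le _ _
    _ = r := (ecc_ascExtension_eq_iff hr _).2 ⟨inl_ne_inr, inl_ne_inr⟩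

theorem connected_ascExtension [Nonempty V] [NeZero r] (hr : 2 ≤ r) :
    (ascExtension G r).Connected := by
  obtain ⟨v⟩ := ‹Nonempty V›
  have reach (y : V ⊕ Fin (2 * r)) : (ascExtension G r).Reachable (inl v) y :=
    reachable_of_edist_ne_top (ne_top_of_le_ne_top (ENat.natCast_ne_top r) (edist_inl_le hr v y))
  exact (connected_iff _).2 ⟨fun x y ↦ (reach x).symm.trans (reach y), ⟨inl v⟩⟩

theorem isASC_ascExtension [Nonempty V] [NeZero r] (hr : 2 ≤ r) : IsASC r (ascExtension G r) := by
  refine ⟨connected_ascExtension hr, graphRadius_ascExtension hr, ?_⟩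
  have noncentral : {x | ecc (ascExtension G r) x ≠ graphRadius (ascExtension G r)} =
      {inr ⟨r - 2, by omega⟩, pendant r} := by
    ext x
    simp only [Set.mem_ofPred_eq, graphRadius_ascExtension hr, ne_eq, ecc_ascExtension_eq_iff hr,
      Set.mem_insert_iff, Set.mem_singleton_iff]
    tauto
  rw [noncentral, Set.ncard_pair]
  simp only [pendant, ne_eq, inr.injEq, Fin.mk.injEq]
  omega

end Construction

theorem theta_le_two_mul_general {V : Type*} [Nonempty V]
    (G : SimpleGraph V) (r : ℕ) (hr : 2 ≤ r) :
    theta r G ≤ 2 * r := by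
  have : NeZero r := ⟨by omega⟩
  exact Nat.sInf_le ⟨ascExtension G r, isASC_ascExtension hr, fun _ _ ↦ Iff.rfl⟩

/-- For every finite simple graph `G` on `n ≥ 1` vertices and every integer `r ≥ 2`,
the `r`-ASC index of `G` satisfies `θ_r(G) ≤ 2r`. -/
theorem theta_le_two_mul {V : Type*} [Fintype V] [Nonempty V]
    (G : SimpleGraph V) (r : ℕ) (hr : 2 ≤ r) :
    theta r G ≤ 2 * r :=
  theta_le_two_mul_general G r hr

end AscPaper
end

section
/- For every integer n ≥ 2, the 3-ASC index of the complete graph K_n equals 5, i.e., θ_3(K_n) = 5. -/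
namespace SimpleGraph

variable {V : Type*} {G : SimpleGraph V} {u v w : V}

lemma dist_le_two (h₁ : G.Adj u w) (h₂ : G.Adj w v) : G.dist u v ≤ 2 :=
  dist_le (.cons h₁ (.cons h₂ .nil))

lemma exists_adj_adj_of_dist_eq_two (h : G.dist u v = 2) : ∃ w, G.Adj u w ∧ G.Adj w v := by
  obtain ⟨p, hp⟩ :=
    (Reachable.of_dist_ne_zero (by omega : G.dist u v ≠ 0)).exists_walk_length_eq_dist
  rw [h] at hp
  match p, hp with
  | .cons h₁ (.cons h₂ .nil), _ => exact ⟨_, h₁, h₂⟩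

lemma Connected.exists_adj_mem_notMem (hG : G.Connected) {S : Set V} (hu : u ∈ S) (hv : v ∉ S) :
    ∃ x ∈ S, ∃ y ∉ S, G.Adj x y := by
  obtain ⟨d, -, hd₁, hd₂⟩ := (hG u v).some.exists_boundary_dart S hu hv
  exact ⟨_, hd₁, _, hd₂, d.adj⟩

def IsGate (G : SimpleGraph V) (g : V) (S : Set V) : Prop :=
  ∀ x y, G.Adj x y → y ∈ S → x ∈ S ∨ x = g

lemma Walk.mem_support_of_isGate {S : Set V} {g : V} (hS : G.IsGate g S) (p : G.Walk u v)
    (hu : u ∉ S) (hv : v ∈ S) : g ∈ p.support := by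
  obtain ⟨d, hd, hd₁, hd₂⟩ := p.exists_boundary_dart Sᶜ hu (by simpa using hv)
  obtain h | rfl := hS _ _ d.adj (not_not.mp hd₂)
  · exact absurd h hd₁
  · exact p.dart_fst_mem_support_of_mem_darts hd

lemma Connected.dist_add_dist_le_of_isGate (hG : G.Connected) {S : Set V} {g : V}
    (hS : G.IsGate g S) (hu : u ∉ S) (hv : v ∈ S) : G.dist u g + G.dist g v ≤ G.dist u v := by
  classical
  obtain ⟨p, hp⟩ := hG.exists_walk_length_eq_dist u v
  have hg := p.mem_support_of_isGate hS hu hv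
  rw [← hp, ← p.take_spec hg, Walk.length_append]
  exact add_le_add (dist_le _) (dist_le _)

lemma Connected.dist_lt_dist_of_isGate (hG : G.Connected) {S : Set V} {g : V}
    (hS : G.IsGate g S) (hu : u ∉ S) (hv : v ∈ S) (hgv : g ≠ v) : G.dist u g < G.dist u v := by
  have := hG.dist_add_dist_le_of_isGate hS hu hv
  have := hG.pos_dist_of_ne hgv
  omega

lemma edist_le_succ_iff {m : ℕ} :
    G.edist u v ≤ (m + 1 : ℕ) ↔ u = v ∨ ∃ w, G.Adj u w ∧ G.edist w v ≤ m := by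
  constructor
  · intro h
    by_cases huv : u = v
    · exact Or.inl huv
    obtain ⟨p, hp⟩ := exists_walk_of_edist_ne_top (h.trans_lt (ENat.natCast_lt_top _)).ne
    cases p with
    | nil => exact absurd rfl huv
    | cons hadj q =>
      refine Or.inr ⟨_, hadj, (edist_le q).trans ?_⟩
      rw [← hp, Walk.length_cons] at h
      exact_mod_cast Nat.le_of_succ_le_succ (by exact_mod_cast h)
  · rintro (rfl | ⟨w, hw, h⟩)
    · simp
    · calc G.edist u v ≤ G.edist u w + G.edist w v := G.edist_triangle
        _ ≤ 1 + m := add_le_add (edist_le_one_iff_adj_or_eq.2 (Or.inl hw)) h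
        _ = (m + 1 : ℕ) := by push_cast; ring

/-- A decidable substitute for `G.edist u v ≤ m` (see `edist_le_iff_reachableWithin`). -/
def ReachableWithin (G : SimpleGraph V) : ℕ → V → V → Prop
  | 0, u, v => u = v
  | m + 1, u, v => u = v ∨ ∃ w, G.Adj u w ∧ ReachableWithin G m w v

instance ReachableWithin.instDecidableRel (G : SimpleGraph V) [Fintype V] [DecidableEq V]
    [DecidableRel G.Adj] : ∀ m, DecidableRel (G.ReachableWithin m)
  | 0 => fun u v => inferInstanceAs (Decidable (u = v))
  | m + 1 => fun u v =>
    have := ReachableWithin.instDecidableRel G m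
    inferInstanceAs (Decidable (u = v ∨ ∃ w, G.Adj u w ∧ G.ReachableWithin m w v))

lemma edist_le_iff_reachableWithin {m : ℕ} : G.edist u v ≤ m ↔ G.ReachableWithin m u v := by
  induction m generalizing u with
  | zero => simp [ReachableWithin]
  | succ m ih => rw [edist_le_succ_iff]; simp only [ReachableWithin, ih]

lemma eccent_eq_succ_of_reachableWithin {m : ℕ} (h₁ : ∀ v, G.ReachableWithin (m + 1) u v)
    (h₂ : ∃ v, ¬ G.ReachableWithin m u v) : G.eccent u = m + 1 := by
  refine le_antisymm ((eccent_le_iff _ _).2 fun v => ?_) ?_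
  · exact_mod_cast edist_le_iff_reachableWithin.2 (h₁ v)
  · obtain ⟨v, hv⟩ := h₂
    rw [← edist_le_iff_reachableWithin, not_le] at hv
    exact (Order.add_one_le_of_lt hv).trans edist_le_eccent

end SimpleGraph

namespace AscPaper

open SimpleGraph Function

variable {V : Type*} {G : SimpleGraph V} {K : Set V} {x y z : V}

lemma ecc_le_iff_dist (hG : G.Connected) {m : ℕ} : ecc G x ≤ m ↔ ∀ y, G.dist x y ≤ m := by
  simp only [ecc, iSup_le_iff, ← (hG x _).coe_dist_eq_edist, Nat.cast_le]

namespace IsASC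

lemma nontrivial {r : ℕ} (hG : IsASC r G) : Nontrivial V := by
  obtain ⟨a, b, hab, -⟩ := Set.ncard_eq_two.1 hG.2.2
  exact ⟨a, b, hab⟩

lemma three_le_ecc (hG : IsASC 3 G) (x : V) : 3 ≤ ecc G x := by
  have h : graphRadius G ≤ ecc G x := iInf_le _ x
  rwa [hG.2.1, Nat.cast_ofNat] at h

lemma exists_three_le_dist (hG : IsASC 3 G) (x : V) : ∃ y, 3 ≤ G.dist x y := by
  by_contra! h
  have h₂ : ecc G x ≤ (2 : ℕ) := (ecc_le_iff_dist hG.1).2 fun y => by have := h y; omega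
  exact absurd ((hG.three_le_ecc x).trans h₂) (by norm_num)

lemma ecc_ne_radius_iff (hG : IsASC 3 G) : ecc G x ≠ graphRadius G ↔ ∃ y, 4 ≤ G.dist x y := by
  rw [hG.2.1, ← not_forall_not]
  refine not_congr ⟨fun h y => ?_, fun h => le_antisymm ?_ (hG.three_le_ecc x)⟩
  · have := (ecc_le_iff_dist hG.1 (m := 3)).1 h.le y
    omega
  · exact (ecc_le_iff_dist hG.1 (m := 3)).2 fun y => by have := h y; omega

lemma exists_four_le_dist (hG : IsASC 3 G) : ∃ x y, 4 ≤ G.dist x y := by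
  obtain ⟨x, hx⟩ := Set.nonempty_of_ncard_ne_zero (hG.2.2.trans_ne (by norm_num))
  exact ⟨x, hG.ecc_ne_radius_iff.1 hx⟩

lemma eq_or_eq_or_eq_of_four_le_dist (hG : IsASC 3 G) {x' y' z' : V} (hx : 4 ≤ G.dist x x')
    (hy : 4 ≤ G.dist y y') (hz : 4 ≤ G.dist z z') : x = y ∨ x = z ∨ y = z := by
  by_contra! hne
  obtain ⟨hxy, hxz, hyz⟩ := hne
  have hsub : {x, y, z} ⊆ {u : V | ecc G u ≠ graphRadius G} := by
    rintro u (rfl | rfl | rfl)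
    exacts [hG.ecc_ne_radius_iff.2 ⟨_, hx⟩, hG.ecc_ne_radius_iff.2 ⟨_, hy⟩,
      hG.ecc_ne_radius_iff.2 ⟨_, hz⟩]
  have h₃ : ({x, y, z} : Set V).ncard = 3 := Set.ncard_eq_three.2 ⟨x, y, z, hxy, hxz, hyz, rfl⟩
  have := Set.ncard_le_ncard hsub (Set.finite_of_ncard_ne_zero (hG.2.2.trans_ne (by norm_num)))
  have := hG.2.2
  omega

end IsASC

def Attached (G : SimpleGraph V) (K : Set V) (a : V) : Prop :=
  a ∉ K ∧ ∃ v ∈ K, G.Adj a v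

def Detached (G : SimpleGraph V) (K : Set V) (b : V) : Prop :=
  b ∉ K ∧ ∀ v ∈ K, ¬ G.Adj b v

lemma mem_or_attached_or_detached (G : SimpleGraph V) (K : Set V) (x : V) :
    x ∈ K ∨ Attached G K x ∨ Detached G K x := by
  by_cases hx : x ∈ K
  · exact Or.inl hx
  by_cases h : ∃ v ∈ K, G.Adj x v
  · exact Or.inr (Or.inl ⟨hx, h⟩)
  · push Not at h
    exact Or.inr (Or.inr ⟨hx, h⟩)

lemma Attached.ne_of_detached (hx : Attached G K x) (hy : Detached G K y) : x ≠ y := by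
  rintro rfl
  obtain ⟨v, hv, hxv⟩ := hx.2
  exact hy.2 v hv hxv

lemma Detached.notMem_of_adj (hy : Detached G K y) (h : G.Adj x y) : x ∉ K :=
  fun hx => hy.2 x hx h.symm

lemma dist_le_one_of_mem (hK : G.IsClique K) (hx : x ∈ K) (hy : y ∈ K) : G.dist x y ≤ 1 := by
  rcases eq_or_ne x y with rfl | hne
  · simp
  · exact (dist_eq_one_iff_adj.2 (hK hx hy hne)).le

lemma Attached.dist_le_two_of_mem (hK : G.IsClique K) (hx : Attached G K x) (hy : y ∈ K) :
    G.dist x y ≤ 2 := by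
  obtain ⟨v, hv, hxv⟩ := hx.2
  rcases eq_or_ne v y with rfl | hne
  · exact (dist_eq_one_iff_adj.2 hxv).le.trans (by norm_num)
  · exact dist_le_two hxv (hK hv hy hne)

lemma exists_detached_three_le_dist (hG : IsASC 3 G) (hK : G.IsClique K) (hx : x ∈ K) :
    ∃ b, Detached G K b ∧ 3 ≤ G.dist x b := by
  obtain ⟨y, hy⟩ := hG.exists_three_le_dist x
  refine ⟨y, ?_, hy⟩
  rcases mem_or_attached_or_detached G K y with hyK | hya | hyd
  · have := dist_le_one_of_mem hK hx hyK
    omega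
  · have := hya.dist_le_two_of_mem hK hx
    rw [dist_comm] at this
    omega
  · exact hyd

lemma exists_two_detached (hG : IsASC 3 G) (hK : G.IsClique K) (hx : x ∈ K) :
    ∃ b₁ b₂, b₁ ≠ b₂ ∧ Detached G K b₁ ∧ Detached G K b₂ := by
  obtain ⟨b, hb, -⟩ := exists_detached_three_le_dist hG hK hx
  by_contra! h
  have honly : ∀ b', Detached G K b' → b' = b := fun b' hb' =>
    by_contra fun hne => h b' b hne hb' hb
  have : Nontrivial V := ⟨x, b, fun hxb => hb.1 (hxb ▸ hx)⟩
  obtain ⟨y, hby⟩ := hG.1.preconnected.exists_adj_of_nontrivial b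
  obtain ⟨v, hv, hyv⟩ : ∃ v ∈ K, G.Adj y v := by
    rcases mem_or_attached_or_detached G K y with hyK | hya | hyd
    · exact absurd hyK (hb.notMem_of_adj hby.symm)
    · exact hya.2
    · exact absurd (honly y hyd ▸ hby) (G.loopless.irrefl b)
  obtain ⟨z, hz⟩ := hG.exists_three_le_dist v
  have : G.dist v z ≤ 2 := by
    rcases mem_or_attached_or_detached G K z with hzK | hza | hzd
    · exact (dist_le_one_of_mem hK hv hzK).trans (by norm_num)
    · exact dist_comm (G := G) ▸ hza.dist_le_two_of_mem hK hv
    · exact honly z hzd ▸ dist_le_two hyv.symm hby.symm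
  omega

lemma exists_two_attached (hG : IsASC 3 G) (hK : G.IsClique K) (hK₂ : K.Nontrivial) :
    ∃ c₁ c₂, c₁ ≠ c₂ ∧ Attached G K c₁ ∧ Attached G K c₂ := by
  obtain ⟨w, hw, w', hw', hww'⟩ := hK₂
  obtain ⟨b, hb, -⟩ := exists_detached_three_le_dist hG hK hw
  obtain ⟨v, hv, c, hc, hvc⟩ := hG.1.exists_adj_mem_notMem hw hb.1
  have hca : Attached G K c := ⟨hc, v, hv, hvc.symm⟩
  by_contra! h
  have honly : ∀ a, Attached G K a → a = c := fun a ha => by_contra fun hne => h a c hne ha hca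
  obtain ⟨y, hy⟩ := hG.exists_three_le_dist c
  have hyd : Detached G K y := by
    rcases mem_or_attached_or_detached G K y with hyK | hya | hyd
    · have := hca.dist_le_two_of_mem hK hyK
      omega
    · rw [honly y hya, dist_self] at hy
      omega
    · exact hyd
  have hS : G.IsGate c {b | Detached G K b} := by
    intro x y hxy hy
    rcases mem_or_attached_or_detached G K x with hxK | hxa | hxd
    · exact absurd hxK (hy.notMem_of_adj hxy)
    · exact Or.inr (honly x hxa)
    · exact Or.inl hxd
  have hfar : ∀ u ∈ K, 4 ≤ G.dist u y := fun u hu => by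
    have := hG.1.dist_add_dist_le_of_isGate hS (fun hud => hud.1 hu) hyd
    have := hG.1.pos_dist_of_ne (ne_of_mem_of_not_mem hu hc)
    omega
  rcases hG.eq_or_eq_or_eq_of_four_le_dist (hfar w hw) (hfar w' hw')
    (dist_comm (G := G) ▸ hfar w hw) with h | h | h
  · exact hww' h
  · exact hyd.1 (h ▸ hw)
  · exact hyd.1 (h ▸ hw')


structure TwoByTwo (G : SimpleGraph V) (K : Set V) (c₁ c₂ d₁ d₂ : V) : Prop where
  attached₁ : Attached G K c₁
  attached₂ : Attached G K c₂
  detached₁ : Detached G K d₁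
  detached₂ : Detached G K d₂
  c_ne : c₁ ≠ c₂
  d_ne : d₁ ≠ d₂
  cover : ∀ x ∉ K, x = c₁ ∨ x = c₂ ∨ x = d₁ ∨ x = d₂

namespace TwoByTwo

variable {c₁ c₂ d₁ d₂ : V}

lemma swap_c (h : TwoByTwo G K c₁ c₂ d₁ d₂) : TwoByTwo G K c₂ c₁ d₁ d₂ :=
  ⟨h.attached₂, h.attached₁, h.detached₁, h.detached₂, h.c_ne.symm, h.d_ne,
    fun x hx => by have := h.cover x hx; tauto⟩

lemma swap_d (h : TwoByTwo G K c₁ c₂ d₁ d₂) : TwoByTwo G K c₁ c₂ d₂ d₁ :=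
  ⟨h.attached₁, h.attached₂, h.detached₂, h.detached₁, h.c_ne, h.d_ne.symm,
    fun x hx => by have := h.cover x hx; tauto⟩

lemma cover_of_adj (h : TwoByTwo G K c₁ c₂ d₁ d₂) (hy : y = d₁ ∨ y = d₂)
    (hxy : G.Adj x y) : x = c₁ ∨ x = c₂ ∨ x = d₁ ∨ x = d₂ := by
  refine h.cover x ?_
  rcases hy with rfl | rfl
  exacts [h.detached₁.notMem_of_adj hxy, h.detached₂.notMem_of_adj hxy]

lemma exists_adj (hG : G.Connected) (h : TwoByTwo G K c₁ c₂ d₁ d₂) :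
    G.Adj c₁ d₁ ∨ G.Adj c₁ d₂ ∨ G.Adj c₂ d₁ ∨ G.Adj c₂ d₂ := by
  have hc₁ : c₁ ∉ ({d₁, d₂} : Set V) := by
    rintro (h' | h')
    exacts [h.attached₁.ne_of_detached h.detached₁ h', h.attached₁.ne_of_detached h.detached₂ h']
  obtain ⟨d, hd, c, hc, hdc⟩ := hG.exists_adj_mem_notMem (Set.mem_insert d₁ {d₂}) hc₁
  have hcd := hdc.symm
  rcases hd with rfl | rfl <;> rcases h.cover_of_adj (by tauto) hcd with rfl | rfl | rfl | rfl <;>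
    first | tauto | simp at hc

lemma false_of_far_of_not_adj (hG : IsASC 3 G) (h : TwoByTwo G K c₁ c₂ d₁ d₂)
    (hfar : 3 ≤ G.dist c₁ c₂) (h₁ : ¬ G.Adj c₂ d₁) (h₂ : ¬ G.Adj c₂ d₂) : False := by
  have hS : G.IsGate c₁ {d₁, d₂} := by
    intro x y hxy hy
    rcases h.cover_of_adj hy hxy with hx | hx | hx | hx
    · exact Or.inr hx
    · rw [hx] at hxy
      rcases hy with rfl | rfl
      exacts [absurd hxy h₁, absurd hxy h₂]
    · exact Or.inl (Or.inl hx)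
    · exact Or.inl (Or.inr hx)
  have hc₂ : c₂ ∉ ({d₁, d₂} : Set V) := by
    rintro (h' | h')
    exacts [h.attached₂.ne_of_detached h.detached₁ h', h.attached₂.ne_of_detached h.detached₂ h']
  have hfar' : ∀ d ∈ ({d₁, d₂} : Set V), 4 ≤ G.dist c₂ d := fun d hd => by
    have hc₁d : c₁ ≠ d := by
      rcases hd with rfl | rfl
      exacts [h.attached₁.ne_of_detached h.detached₁, h.attached₁.ne_of_detached h.detached₂]
    have := hG.1.dist_lt_dist_of_isGate hS hc₂ hd hc₁d
    rw [dist_comm] at hfar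
    omega
  rcases hG.eq_or_eq_or_eq_of_four_le_dist (hfar' d₁ (.inl rfl))
    (by rw [dist_comm]; exact hfar' d₁ (.inl rfl)) (by rw [dist_comm]; exact hfar' d₂ (.inr rfl))
    with h' | h' | h'
  exacts [h.attached₂.ne_of_detached h.detached₁ h', h.attached₂.ne_of_detached h.detached₂ h',
    h.d_ne h']

lemma four_le_dist_of_far (hG : G.Connected) (h : TwoByTwo G K c₁ c₂ d₁ d₂)
    (hfar : 3 ≤ G.dist c₁ c₂) (h₁ : G.Adj c₁ d₁) (hd : ¬ G.Adj d₁ d₂) : 4 ≤ G.dist c₂ d₁ := by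
  have hS : G.IsGate c₁ {d₁} := by
    intro x y hxy hy
    rw [Set.mem_singleton_iff] at hy
    rw [hy] at hxy
    rcases h.cover_of_adj (.inl rfl) hxy with hx | hx | hx | hx
    · exact Or.inr hx
    · rw [hx] at hxy
      have := dist_le_two h₁ hxy.symm
      omega
    · exact Or.inl hx
    · rw [hx] at hxy
      exact absurd hxy.symm hd
  have := hG.dist_lt_dist_of_isGate hS (h.attached₂.ne_of_detached h.detached₁)
    (Set.mem_singleton d₁) (h.attached₁.ne_of_detached h.detached₁)
  rw [dist_comm] at hfar
  omega

lemma dist_le_three_of_cycle (hG : G.Connected) (hK : G.IsClique K)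
    (h : TwoByTwo G K c₁ c₂ d₁ d₂) (h₁ : G.Adj c₁ d₁) (h₂ : G.Adj c₂ d₂) (hd : G.Adj d₁ d₂)
    (y : V) : G.dist c₁ y ≤ 3 ∧ G.dist d₁ y ≤ 3 ∧ ∀ w ∈ K, G.dist w y ≤ 3 := by
  have e₁ := dist_eq_one_iff_adj.2 h₁
  have e₁' := dist_eq_one_iff_adj.2 h₁.symm
  by_cases hy : y ∈ K
  · have := h.attached₁.dist_le_two_of_mem hK hy
    have := hG.dist_triangle (u := d₁) (v := c₁) (w := y)
    exact ⟨by omega, by omega, fun w hw => (dist_le_one_of_mem hK hw hy).trans (by norm_num)⟩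
  obtain hy | hy | hy | hy := h.cover y hy <;> rw [hy]
  · refine ⟨by simp, by omega, fun w hw => ?_⟩
    have := h.attached₁.dist_le_two_of_mem hK hw
    rw [dist_comm] at this
    omega
  · obtain ⟨v, hv, hcv⟩ := h.attached₂.2
    have := h.attached₁.dist_le_two_of_mem hK hv
    have := hG.dist_triangle (u := c₁) (v := v) (w := c₂)
    have := dist_eq_one_iff_adj.2 hcv.symm
    refine ⟨by omega, (dist_le_two hd h₂.symm).trans (by norm_num), fun w hw => ?_⟩
    have := h.attached₂.dist_le_two_of_mem hK hw
    rw [dist_comm] at this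
    omega
  · refine ⟨by omega, by simp, fun w hw => ?_⟩
    have := h.attached₁.dist_le_two_of_mem hK hw
    rw [dist_comm] at this
    have := hG.dist_triangle (u := w) (v := c₁) (w := d₁)
    omega
  · refine ⟨(dist_le_two h₁ hd).trans (by norm_num), (dist_eq_one_iff_adj.2 hd).le.trans
      (by norm_num), fun w hw => ?_⟩
    have := h.attached₂.dist_le_two_of_mem hK hw
    rw [dist_comm] at this
    have := hG.dist_triangle (u := w) (v := c₂) (w := d₂)
    have := dist_eq_one_iff_adj.2 h₂
    omega

lemma false_of_far_of_adj_adj (hG : IsASC 3 G) (hK : G.IsClique K)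
    (h : TwoByTwo G K c₁ c₂ d₁ d₂) (hfar : 3 ≤ G.dist c₁ c₂) (h₁ : G.Adj c₁ d₁)
    (h₂ : G.Adj c₂ d₂) : False := by
  by_cases hd : G.Adj d₁ d₂
  · obtain ⟨x, y, hxy⟩ := hG.exists_four_le_dist
    have near := h.dist_le_three_of_cycle hG.1 hK h₁ h₂ hd y
    have near' := h.swap_c.swap_d.dist_le_three_of_cycle hG.1 hK h₂ h₁ hd.symm y
    have : G.dist x y ≤ 3 := by
      by_cases hx : x ∈ K
      · exact near.2.2 x hx
      obtain hx | hx | hx | hx := h.cover x hx <;> rw [hx]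
      exacts [near.1, near'.1, near.2.1, near'.2.1]
    omega
  · have e₁ := h.four_le_dist_of_far hG.1 hfar h₁ hd
    have e₂ := h.swap_c.swap_d.four_le_dist_of_far hG.1 (by rwa [dist_comm]) h₂
      fun h' => hd h'.symm
    rcases hG.eq_or_eq_or_eq_of_four_le_dist e₂ e₁ (by rw [dist_comm]; exact e₁)
      with h' | h' | h'
    exacts [h.c_ne h', h.attached₁.ne_of_detached h.detached₁ h',
      h.attached₂.ne_of_detached h.detached₁ h']

lemma false_of_far (hG : IsASC 3 G) (hK : G.IsClique K) (h : TwoByTwo G K c₁ c₂ d₁ d₂)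
    (hfar : 3 ≤ G.dist c₁ c₂) : False := by
  wlog h₂ : G.Adj c₂ d₂ generalizing d₁ d₂
  · by_cases h₁ : G.Adj c₂ d₁
    · exact this h.swap_d h₁
    · exact h.false_of_far_of_not_adj hG hfar h₁ h₂
  by_cases h₁ : G.Adj c₁ d₁
  · exact h.false_of_far_of_adj_adj hG hK hfar h₁ h₂
  · refine h.swap_c.false_of_far_of_not_adj hG (by rwa [dist_comm]) h₁ fun h₁₂ => ?_
    have := dist_le_two h₁₂ h₂.symm
    omega

lemma false_of_near (hG : IsASC 3 G) (hK : G.IsClique K) (h : TwoByTwo G K c₁ c₂ d₁ d₂)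
    (h₁ : G.Adj c₁ d₁) (hnear : G.dist c₁ c₂ ≤ 2) : False := by
  have : Nontrivial V := ⟨c₁, c₂, h.c_ne⟩
  have e₁ := dist_eq_one_iff_adj.2 h₁
  have hfar₁ : 3 ≤ G.dist c₁ d₂ := by
    obtain ⟨y, hy⟩ := hG.exists_three_le_dist c₁
    by_cases hyK : y ∈ K
    · have := h.attached₁.dist_le_two_of_mem hK hyK
      omega
    obtain hy' | hy' | hy' | hy' := h.cover y hyK <;> rw [hy'] at hy
    · simp at hy
    · omega
    · omega
    · exact hy
  have hc₂d₂ : G.Adj c₂ d₂ := by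
    obtain ⟨t, ht⟩ := hG.1.preconnected.exists_adj_of_nontrivial d₂
    rcases h.cover_of_adj (.inr rfl) ht.symm with h' | h' | h' | h' <;> rw [h'] at ht
    · have := dist_eq_one_iff_adj.2 ht.symm
      omega
    · exact ht.symm
    · have := dist_le_two h₁ ht.symm
      omega
    · exact absurd ht (G.loopless.irrefl _)
  have hfar₂ : 3 ≤ G.dist c₂ d₁ := by
    obtain ⟨y, hy⟩ := hG.exists_three_le_dist c₂
    by_cases hyK : y ∈ K
    · have := h.attached₂.dist_le_two_of_mem hK hyK
      omega
    obtain hy' | hy' | hy' | hy' := h.cover y hyK <;> rw [hy'] at hy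
    · rw [dist_comm] at hy
      omega
    · simp at hy
    · exact hy
    · have := dist_eq_one_iff_adj.2 hc₂d₂
      omega
  have hnadj : ¬ G.Adj c₁ c₂ := fun h₁₂ => by
    have := dist_le_two h₁₂.symm h₁
    omega
  obtain ⟨m, hm₁, hm₂⟩ := exists_adj_adj_of_dist_eq_two
    (le_antisymm hnear (hG.1.one_lt_dist_of_ne_of_not_adj h.c_ne hnadj))
  have hmK : m ∈ K := by
    by_contra hmK
    rcases h.cover m hmK with h' | h' | h' | h' <;> rw [h'] at hm₁ hm₂
    · exact G.loopless.irrefl _ hm₁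
    · exact G.loopless.irrefl _ hm₂
    · have := dist_eq_one_iff_adj.2 hm₂.symm
      omega
    · have := dist_eq_one_iff_adj.2 hm₁
      omega
  obtain ⟨y, hy⟩ := hG.exists_three_le_dist m
  have : G.dist m y ≤ 2 := by
    by_cases hyK : y ∈ K
    · exact (dist_le_one_of_mem hK hmK hyK).trans (by norm_num)
    obtain h' | h' | h' | h' := h.cover y hyK <;> rw [h']
    · exact (dist_eq_one_iff_adj.2 hm₁.symm).le.trans (by norm_num)
    · exact (dist_eq_one_iff_adj.2 hm₂).le.trans (by norm_num)
    · exact dist_le_two hm₁.symm h₁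
    · exact dist_le_two hm₂ hc₂d₂
  omega

end TwoByTwo

lemma not_twoByTwo (hG : IsASC 3 G) (hK : G.IsClique K) {c₁ c₂ d₁ d₂ : V} :
    ¬ TwoByTwo G K c₁ c₂ d₁ d₂ := by
  intro h
  by_cases hfar : 3 ≤ G.dist c₁ c₂
  · exact h.false_of_far hG hK hfar
  have hnear : G.dist c₁ c₂ ≤ 2 := by omega
  rcases h.exists_adj hG.1 with h₁ | h₁ | h₁ | h₁
  · exact h.false_of_near hG hK h₁ hnear
  · exact h.swap_d.false_of_near hG hK h₁ hnear
  · exact h.swap_c.false_of_near hG hK h₁ (by rwa [dist_comm])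
  · exact h.swap_c.swap_d.false_of_near hG hK h₁ (by rwa [dist_comm])

theorem five_le_ncard_compl [Finite V] (hG : IsASC 3 G) (hK : G.IsClique K)
    (hK₂ : K.Nontrivial) : 5 ≤ Kᶜ.ncard := by
  by_contra! hlt
  obtain ⟨c₁, c₂, hc, hc₁, hc₂⟩ := exists_two_attached hG hK hK₂
  obtain ⟨w, hw⟩ := hK₂.nonempty
  obtain ⟨d₁, d₂, hd, hd₁, hd₂⟩ := exists_two_detached hG hK hw
  have hsub : ({c₁, c₂, d₁, d₂} : Set V) ⊆ Kᶜ := by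
    rintro x (rfl | rfl | rfl | rfl)
    exacts [hc₁.1, hc₂.1, hd₁.1, hd₂.1]
  have h₄ : ({c₁, c₂, d₁, d₂} : Set V).ncard = 4 := by
    rw [Set.ncard_insert_of_notMem, Set.ncard_insert_of_notMem, Set.ncard_pair hd]
    · simp [hc₂.ne_of_detached hd₁, hc₂.ne_of_detached hd₂]
    · simp [hc, hc₁.ne_of_detached hd₁, hc₁.ne_of_detached hd₂]
  have heq := Set.eq_of_subset_of_ncard_le hsub (by omega)
  exact not_twoByTwo hG hK ⟨hc₁, hc₂, hd₁, hd₂, hc, hd, fun x hx => by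
    rw [← Set.mem_compl_iff, ← heq] at hx
    exact hx⟩

section Blowup

variable {W : Type*}

def cliqueBlowup (Q : SimpleGraph W) (f : V → W) : SimpleGraph V where
  Adj x y := x ≠ y ∧ (f x = f y ∨ Q.Adj (f x) (f y))
  symm := ⟨fun _ _ h => ⟨h.1.symm, h.2.imp Eq.symm Adj.symm⟩⟩
  loopless := ⟨fun _ h => h.1 rfl⟩

variable {Q : SimpleGraph W} {f : V → W}

lemma cliqueBlowup_adj : (cliqueBlowup Q f).Adj x y ↔ x ≠ y ∧ (f x = f y ∨ Q.Adj (f x) (f y)) :=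
  Iff.rfl

lemma edist_le_edist_cliqueBlowup : Q.edist (f x) (f y) ≤ (cliqueBlowup Q f).edist x y := by
  rw [edist_eq_sInf (G := cliqueBlowup Q f)]
  refine le_sInf ?_
  rintro _ ⟨p, rfl⟩
  induction p with
  | nil => simp
  | @cons x x' y h p ih =>
    calc Q.edist (f x) (f y) ≤ Q.edist (f x) (f x') + Q.edist (f x') (f y) := Q.edist_triangle
      _ ≤ 1 + p.length := add_le_add (edist_le_one_iff_adj_or_eq.2 h.2.symm) ih
      _ = (p.cons h).length := by simp [add_comm]

lemma edist_cliqueBlowup_le_one (h : f x = f y) : (cliqueBlowup Q f).edist x y ≤ 1 := by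
  refine edist_le_one_iff_adj_or_eq.2 ?_
  by_cases hxy : x = y
  exacts [Or.inr hxy, Or.inl (cliqueBlowup_adj.2 ⟨hxy, Or.inl h⟩)]

/-- A walk `f x, a, …, b` of `Q` lifts, through representatives of `a, …`, to a walk from `x` to
any `y` over `b`. -/
lemma edist_cliqueBlowup_le_length_add_one (hf : Surjective f) {a b : W} (q : Q.Walk a b)
    (hx : Q.Adj (f x) a) (hy : f y = b) : (cliqueBlowup Q f).edist x y ≤ q.length + 1 := by
  induction q generalizing x with
  | nil =>
    subst hy
    have hxy : (cliqueBlowup Q f).Adj x y :=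
      cliqueBlowup_adj.2 ⟨fun h => hx.ne (congrArg f h), Or.inr hx⟩
    simpa using edist_le_one_iff_adj_or_eq.2 (Or.inl hxy)
  | @cons a a' b h q ih =>
    have hx' : f (surjInv hf a) = a := surjInv_eq hf a
    have hadj : (cliqueBlowup Q f).Adj x (surjInv hf a) :=
      cliqueBlowup_adj.2 ⟨fun h' => hx.ne (by rw [h', hx']), Or.inr (by rw [hx']; exact hx)⟩
    calc (cliqueBlowup Q f).edist x y
        ≤ (cliqueBlowup Q f).edist x (surjInv hf a) + (cliqueBlowup Q f).edist (surjInv hf a) y :=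
          (cliqueBlowup Q f).edist_triangle
      _ ≤ 1 + (q.length + 1) :=
          add_le_add (edist_le_one_iff_adj_or_eq.2 (Or.inl hadj)) (ih (by rw [hx']; exact h) hy)
      _ = (q.cons h).length + 1 := by simp [add_comm]

lemma edist_cliqueBlowup_le (hf : Surjective f) (hxy : f x ≠ f y) :
    (cliqueBlowup Q f).edist x y ≤ Q.edist (f x) (f y) := by
  by_cases hr : Q.Reachable (f x) (f y)
  · obtain ⟨p, hp⟩ := hr.exists_walk_length_eq_edist
    have hnil : ¬ p.Nil := Walk.not_nil_of_ne hxy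
    rw [← hp, ← Walk.length_tail_add_one hnil]
    exact_mod_cast edist_cliqueBlowup_le_length_add_one hf p.tail (Walk.adj_snd hnil) rfl
  · rw [edist_eq_top_of_not_reachable hr]
    exact le_top

lemma ecc_cliqueBlowup (hf : Surjective f) (hQ : ∀ a, 1 ≤ ecc Q a) (x : V) :
    ecc (cliqueBlowup Q f) x = ecc Q (f x) := by
  refine le_antisymm (iSup_le fun y => ?_) (iSup_le fun b => ?_)
  · by_cases hxy : f x = f y
    · exact (edist_cliqueBlowup_le_one hxy).trans (hQ _)
    · exact (edist_cliqueBlowup_le hf hxy).trans (le_iSup _ _)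
  · obtain ⟨y, rfl⟩ := hf b
    exact edist_le_edist_cliqueBlowup.trans (le_iSup _ y)

theorem isASC_cliqueBlowup {r : ℕ} (hQ : IsASC r Q) (hf : Surjective f)
    (hinj : ∀ x y, f x = f y → ecc Q (f x) ≠ graphRadius Q → x = y) :
    IsASC r (cliqueBlowup Q f) := by
  have := hQ.nontrivial
  have hecc := ecc_cliqueBlowup (Q := Q) hf fun a =>
    Order.one_le_iff_pos.2 ((eccent_pos_iff a).2 this)
  have hrad : graphRadius (cliqueBlowup Q f) = graphRadius Q := by
    simp only [graphRadius, hecc]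
    exact hf.iInf_comp (ecc Q)
  refine ⟨?_, hrad.trans hQ.2.1, ?_⟩
  · obtain ⟨a⟩ := hQ.1.nonempty
    have : Nonempty V := ⟨surjInv hf a⟩
    refine ⟨fun x y => reachable_of_edist_ne_top ?_⟩
    by_cases hxy : f x = f y
    · exact ((edist_cliqueBlowup_le_one hxy).trans_lt (by decide)).ne
    · exact ((edist_cliqueBlowup_le hf hxy).trans_lt
        (lt_top_iff_ne_top.2 (edist_ne_top_iff_reachable.2 (hQ.1 _ _)))).ne
  · have hpre : {x | ecc (cliqueBlowup Q f) x ≠ graphRadius (cliqueBlowup Q f)} =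
        f ⁻¹' {a | ecc Q a ≠ graphRadius Q} := by
      ext x
      simp [hecc, hrad]
    have hinj' : Set.InjOn f (f ⁻¹' {a | ecc Q a ≠ graphRadius Q}) :=
      fun x hx y _ hxy => hinj x y hxy hx
    rw [hpre, ← hinj'.ncard_image, Set.image_preimage_eq _ hf, hQ.2.2]

end Blowup

/-- The 6-cycle `0 - 2 - 3 - 4 - 5 - 1 - 0` with a pendant vertex `6` at `4`, the vertex opposite
to `0`. -/
def cyclePendant : SimpleGraph (Fin 7) :=
  SimpleGraph.fromRel fun a b => (a, b) ∈ [(0, 2), (2, 3), (3, 4), (4, 5), (5, 1), (1, 0), (4, 6)]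

instance : DecidableRel cyclePendant.Adj := fun _ _ => inferInstanceAs (Decidable (_ ∧ _))

lemma ecc_cyclePendant (a : Fin 7) : ecc cyclePendant a = if a = 0 ∨ a = 6 then 4 else 3 := by
  have key : ∀ a : Fin 7,
      (∀ b, cyclePendant.ReachableWithin ((if a = 0 ∨ a = 6 then 3 else 2) + 1) a b) ∧
        ∃ b, ¬ cyclePendant.ReachableWithin (if a = 0 ∨ a = 6 then 3 else 2) a b := by
    decide
  have := eccent_eq_succ_of_reachableWithin (key a).1 (key a).2
  change cyclePendant.eccent a = _
  rw [this]
  split_ifs <;> rfl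

lemma isASC_cyclePendant : IsASC 3 cyclePendant := by
  have hrad : graphRadius cyclePendant = 3 :=
    le_antisymm (iInf_le_of_le 1 (by simp [ecc_cyclePendant]))
      (le_iInf fun a => by rw [ecc_cyclePendant]; split_ifs <;> norm_num)
  refine ⟨⟨fun a b => reachable_of_edist_ne_top ?_⟩, by simp [hrad], ?_⟩
  · refine (edist_le_eccent.trans_lt ?_).ne
    change ecc cyclePendant a < ⊤
    rw [ecc_cyclePendant]
    split_ifs <;> decide
  · have : {a | ecc cyclePendant a ≠ graphRadius cyclePendant} = {0, 6} := by
      ext a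
      fin_cases a <;> simp [ecc_cyclePendant, hrad]
    rw [this, Set.ncard_pair (by decide)]

/-- `K_n` is blown up from the edge `0 - 1` of `cyclePendant`: vertex `0` of `K_n` sits over `0`,
the other `n - 1` over `1`; the five added vertices sit over `2, …, 6`. -/
def cliqueClass (n : ℕ) : Fin n ⊕ Fin 5 → Fin 7
  | .inl u => if (u : ℕ) = 0 then 0 else 1
  | .inr a => a.natAdd 2

lemma cliqueClass_surjective {n : ℕ} (hn : 2 ≤ n) : Surjective (cliqueClass n) := by
  intro a
  fin_cases a
  · exact ⟨.inl ⟨0, by omega⟩, rfl⟩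
  · exact ⟨.inl ⟨1, by omega⟩, rfl⟩
  exacts [⟨.inr 0, rfl⟩, ⟨.inr 1, rfl⟩, ⟨.inr 2, rfl⟩, ⟨.inr 3, rfl⟩, ⟨.inr 4, rfl⟩]

lemma cliqueClass_injOn {n : ℕ} {x y : Fin n ⊕ Fin 5} (hxy : cliqueClass n x = cliqueClass n y)
    (hx : cliqueClass n x ≠ 1) : x = y := by
  rcases x with u | a <;> rcases y with v | b <;>
    simp only [cliqueClass, Fin.ext_iff, Fin.val_natAdd, Sum.inl.injEq, Sum.inr.injEq,
      reduceCtorEq] at hxy hx ⊢ <;> (try split_ifs at hxy hx) <;> simp_all <;> omega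

lemma cliqueBlowup_adj_inl {n : ℕ} (u v : Fin n) :
    (cliqueBlowup cyclePendant (cliqueClass n)).Adj (.inl u) (.inl v) ↔
      (⊤ : SimpleGraph (Fin n)).Adj u v := by
  simp only [cliqueBlowup_adj, cliqueClass, top_adj, ne_eq, Sum.inl.injEq]
  refine ⟨And.left, fun huv => ⟨huv, ?_⟩⟩
  split_ifs with hu hv hv
  · exact absurd (Fin.ext (hu.trans hv.symm)) huv
  all_goals decide

lemma isASC_cliqueBlowup_cyclePendant {n : ℕ} (hn : 2 ≤ n) :
    IsASC 3 (cliqueBlowup cyclePendant (cliqueClass n)) := by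
  refine isASC_cliqueBlowup isASC_cyclePendant (cliqueClass_surjective hn) ?_
  intro x y hxy hx
  refine cliqueClass_injOn hxy fun h₁ => hx ?_
  rw [h₁, ecc_cyclePendant, isASC_cyclePendant.2.1]
  rfl

/-- For every integer `n ≥ 2`, the 3-ASC index of the complete graph `K_n` equals 5. -/
theorem theta_three_complete (n : ℕ) (hn : 2 ≤ n) :
    theta 3 (⊤ : SimpleGraph (Fin n)) = 5 := by
  have h₅ : 5 ∈ {k : ℕ | ∃ H : SimpleGraph (Fin n ⊕ Fin k), IsASC 3 H ∧
      ∀ u v, H.Adj (.inl u) (.inl v) ↔ (⊤ : SimpleGraph (Fin n)).Adj u v} :=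
    ⟨_, isASC_cliqueBlowup_cyclePendant hn, cliqueBlowup_adj_inl⟩
  refine le_antisymm (Nat.sInf_le h₅) (le_csInf ⟨5, h₅⟩ ?_)
  rintro k ⟨H, hH, hind⟩
  have hK : H.IsClique (Set.range Sum.inl) := by
    rintro _ ⟨u, rfl⟩ _ ⟨v, rfl⟩ huv
    exact (hind u v).2 fun h => huv (congrArg _ h)
  have hK₂ : (Set.range (Sum.inl : Fin n → Fin n ⊕ Fin k)).Nontrivial :=
    ⟨.inl ⟨0, by omega⟩, ⟨_, rfl⟩, .inl ⟨1, by omega⟩, ⟨_, rfl⟩, by simp⟩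
  calc 5 ≤ (Set.range Sum.inl)ᶜ.ncard := five_le_ncard_compl hH hK hK₂
    _ = k := by
      simp [Set.compl_range_inl, Set.ncard_range_of_injective Sum.inr_injective]

end AscPaper
end

section
/- Let G be a 2-SC graph (every vertex of G has eccentricity 2). If G contains a diametrical pair u, v and vertices u', v' such that u' ∈ N_G(u) \ N_G(v), v' ∈ N_G(v) \ N_G(u), and N_G(u) ∩ N_G(v) ⊆ Ecc_G(u') ∩ Ecc_G(v'), then θ_3(G) = 3. -/
/-!
Attach a pendant vertex `p` to `u`, a pendant vertex `q` to `v`, and a vertex `s` adjacent to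
exactly `u'` and `v'`. Since `G` has diameter 2, every old vertex has eccentricity at most 3, and
exactly 3: outside `N[v]` it is at distance 3 from `q`, outside `N[u]` from `p`, and a common
neighbour of `u` and `v` is at distance 2 from `u'` and `v'`, hence at distance 3 from `s`. The
same common neighbours give `ecc s = 3`, while `d(p, q) = 4`, so `p` and `q` are the only
non-central vertices.

Conversely, in a connected graph obtained from `G` by adding at most two vertices, some old
vertex is within distance 2 of every added vertex: a neighbour of an added vertex, or a middle
vertex of a path of length 2 in `G` between neighbours of the two added vertices. Its
eccentricity is 2, so the radius is not 3.
-/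

namespace AscPaper

open SimpleGraph

open Sum

section Distance

variable {α β : Type*} {G : SimpleGraph α}

lemma edist_map_le {G' : SimpleGraph β} (f : G →g G') (a b : α) :
    G'.edist (f a) (f b) ≤ G.edist a b := by
  by_cases hr : G.Reachable a b
  · obtain ⟨p, hp⟩ := hr.exists_walk_length_eq_edist
    rw [← hp, ← Walk.length_map f]
    exact edist_le _
  · exact edist_eq_top_of_not_reachable hr ▸ le_top

lemma edist_le_one_of_adj {a b : α} (h : G.Adj a b) : G.edist a b ≤ 1 :=
  edist_le_one_iff_adj_or_eq.mpr (Or.inl h)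

lemma edist_le_two_of_edist_le_one {x y z : α} (hxy : G.edist x y ≤ 1)
    (hyz : G.edist y z ≤ 1) :
    G.edist x z ≤ 2 :=
  SimpleGraph.edist_triangle.trans ((add_le_add hxy hyz).trans_eq one_add_one_eq_two)

lemma two_le_edist_iff {a b : α} : 2 ≤ G.edist a b ↔ a ≠ b ∧ ¬G.Adj a b := by
  rw [← one_add_one_eq_two, ENat.add_one_le_iff ENat.one_ne_top, ← not_le,
    edist_le_one_iff_adj_or_eq]
  tauto

lemma add_one_le_edist_of_forall_adj {x z : α} {n : ℕ∞} (hxz : x ≠ z)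
    (h : ∀ y, G.Adj x y → n ≤ G.edist y z) : n + 1 ≤ G.edist x z := by
  rw [edist_eq_sInf]
  refine le_sInf ?_
  rintro _ ⟨_ | ⟨hxy, p⟩, rfl⟩
  · exact absurd rfl hxz
  · simpa [Walk.length_cons] using add_le_add_right ((h _ hxy).trans (edist_le p)) 1

lemma exists_edist_le_one_of_edist_le_two {a b : α} (h : G.edist a b ≤ 2) :
    ∃ w, G.edist a w ≤ 1 ∧ G.edist w b ≤ 1 := by
  by_cases hab : G.edist a b ≤ 1
  · exact ⟨b, hab, by simp⟩
  have h2 : G.edist a b = 2 :=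
    le_antisymm h (by rw [← one_add_one_eq_two]; exact Order.add_one_le_of_lt (not_le.mp hab))
  obtain ⟨-, -, w, hwa, hwb⟩ := edist_eq_two_iff.mp h2
  exact ⟨w, edist_le_one_of_adj hwa, edist_le_one_of_adj hwb.symm⟩

lemma eccent_le_edist_add_eccent (x y : α) : G.eccent x ≤ G.edist x y + G.eccent y :=
  (eccent_le_iff _ _).mpr fun _ =>
    SimpleGraph.edist_triangle.trans (add_le_add le_rfl edist_le_eccent)

lemma isASC_of_eccent {r : ℕ} {x y z : α} (hxy : x ≠ y) (hx : r < G.eccent x)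
    (hy : r < G.eccent y) (hz : G.eccent z = r)
    (hcentral : ∀ w, w ≠ x → w ≠ y → G.eccent w = r) : IsASC r G := by
  have hreach (w : α) : G.Reachable z w :=
    reachable_of_edist_ne_top (ne_top_of_le_ne_top (hz ▸ ENat.natCast_ne_top r) edist_le_eccent)
  have hle (w : α) : (r : ℕ∞) ≤ G.eccent w := by
    by_cases hwx : w = x
    · exact hwx ▸ hx.le
    by_cases hwy : w = y
    · exact hwy ▸ hy.le
    exact (hcentral w hwx hwy).ge
  have hrad : G.radius = r := le_antisymm (hz ▸ radius_le_eccent) (le_iInf hle)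
  have hnoncentral : {w | G.eccent w ≠ G.radius} = {x, y} := by
    ext w
    simp only [Set.mem_ofPred_eq, Set.mem_insert_iff, Set.mem_singleton_iff, hrad]
    refine ⟨fun h => ?_, ?_⟩
    · by_contra! hw
      exact h (hcentral w hw.1 hw.2)
    · rintro (rfl | rfl)
      exacts [hx.ne', hy.ne']
  -- `ecc` and `graphRadius` unfold to Mathlib's `eccent` and `radius`.
  show G.Connected ∧ G.radius = r ∧ {w | G.eccent w ≠ G.radius}.ncard = 2
  have hconn : G.Connected :=
    (connected_iff G).mpr ⟨fun a b => (hreach a).symm.trans (hreach b), ⟨z⟩⟩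
  refine ⟨hconn, hrad, ?_⟩
  rw [hnoncentral, Set.ncard_pair hxy]

end Distance

section FewAddedVertices

variable {V W : Type*} {G : SimpleGraph V} {H : SimpleGraph (V ⊕ W)}

lemma exists_adj_inr_inl (hH : H.Preconnected) (a : V) (i : W) :
    ∃ j c, H.Adj (inr j) (inl c) := by
  obtain ⟨p⟩ := hH (inr i) (inl a)
  obtain ⟨d, -, ⟨j, hj⟩, hd⟩ :=
    p.exists_boundary_dart (Set.range inr) ⟨i, rfl⟩ (by simp)
  rcases hs : d.snd with c | l
  · exact ⟨j, c, hj ▸ hs ▸ d.adj⟩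
  · exact absurd ⟨l, hs.symm⟩ hd

lemma exists_forall_edist_inr_le_two (hG : ∀ a b, G.edist a b ≤ 2)
    (hGH : ∀ {a b}, G.Adj a b → H.Adj (inl a) (inl b)) (hH : H.Preconnected)
    (hW₂ : ∀ i i' j : W, i ≠ j → i' ≠ j → i = i') (a : V) :
    ∃ c, ∀ i, H.edist (inl c) (inr i) ≤ 2 := by
  have hinl (b c : V) : H.edist (inl b) (inl c) ≤ G.edist b c := edist_map_le ⟨inl, hGH⟩ b c
  rcases isEmpty_or_nonempty W with hW₀ | ⟨⟨i₀⟩⟩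
  · exact ⟨a, isEmptyElim⟩
  obtain ⟨j, c, hjc⟩ := exists_adj_inr_inl hH a i₀
  by_cases hc : ∀ i, H.edist (inl c) (inr i) ≤ 2
  · exact ⟨c, hc⟩
  push Not at hc
  obtain ⟨i, hi⟩ := hc
  have hij : i ≠ j := by
    rintro rfl
    exact hi.not_ge ((edist_le_one_of_adj hjc.symm).trans one_le_two)
  obtain ⟨p⟩ := hH (inr i) (inl c)
  rcases hx : p.snd with b | l
  · have hib : H.Adj (inr i) (inl b) := hx ▸ p.adj_snd (p.not_nil_of_ne (by simp))
    obtain ⟨w, hbw, hwc⟩ := exists_edist_le_one_of_edist_le_two (hG b c)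
    refine ⟨w, fun l => ?_⟩
    rcases eq_or_ne l j with rfl | hlj
    · exact edist_le_two_of_edist_le_one ((hinl w c).trans hwc) (edist_le_one_of_adj hjc.symm)
    · obtain rfl := hW₂ l i j hlj hij
      refine edist_le_two_of_edist_le_one ?_ (edist_le_one_of_adj hib.symm)
      exact (hinl w b).trans (edist_comm.trans_le hbw)
  · have hil : H.Adj (inr i) (inr l) := hx ▸ p.adj_snd (p.not_nil_of_ne (by simp))
    obtain rfl : l = j := by
      by_contra hlj
      exact H.ne_of_adj hil (congrArg inr (hW₂ i l j hij hlj))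
    exact absurd (edist_le_two_of_edist_le_one (edist_le_one_of_adj hjc.symm)
      (edist_le_one_of_adj hil.symm)) hi.not_ge

lemma radius_le_two_of_card_le_two {k : ℕ} {H : SimpleGraph (V ⊕ Fin k)} (hk : k ≤ 2)
    (hG : ∀ a b, G.edist a b ≤ 2) (hGH : ∀ {a b}, G.Adj a b → H.Adj (inl a) (inl b))
    (hH : H.Preconnected) (a : V) : H.radius ≤ 2 := by
  obtain ⟨c, hc⟩ := exists_forall_edist_inr_le_two hG hGH hH (by omega) a
  refine radius_le_eccent.trans ((eccent_le_iff (inl c) 2).mpr ?_)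
  rintro (b | i)
  exacts [(edist_map_le ⟨inl, hGH⟩ c b).trans (hG c b), hc i]

end FewAddedVertices

section Attach

variable {V W : Type*} {G : SimpleGraph V} {A : W → Set V}

def attach (G : SimpleGraph V) (A : W → Set V) : SimpleGraph (V ⊕ W) where
  Adj
    | inl a, inl b => G.Adj a b
    | inl a, inr i | inr i, inl a => a ∈ A i
    | inr _, inr _ => False
  symm := ⟨by rintro (a | i) (b | j) h <;> first | exact G.adj_symm h | exact h⟩
  loopless := ⟨by rintro (a | i) h; exacts [G.loopless.irrefl a h, h]⟩

@[simp] lemma attach_adj_inl_inl {a b : V} : (attach G A).Adj (inl a) (inl b) ↔ G.Adj a b :=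
  Iff.rfl

@[simp] lemma attach_adj_inl_inr {a : V} {i : W} : (attach G A).Adj (inl a) (inr i) ↔ a ∈ A i :=
  Iff.rfl

@[simp] lemma attach_adj_inr_inl {a : V} {i : W} : (attach G A).Adj (inr i) (inl a) ↔ a ∈ A i :=
  Iff.rfl

@[simp] lemma not_attach_adj_inr_inr {i j : W} : ¬(attach G A).Adj (inr i) (inr j) :=
  id

lemma edist_attach_inl_inl_le (a b : V) : (attach G A).edist (inl a) (inl b) ≤ G.edist a b :=
  edist_map_le ⟨inl, id⟩ a b

lemma edist_attach_inr_inl_le {i : W} {b : V} (hb : b ∈ A i) (a : V) :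
    (attach G A).edist (inr i) (inl a) ≤ 1 + G.edist b a :=
  SimpleGraph.edist_triangle.trans
    (add_le_add (edist_le_one_of_adj (by simpa)) (edist_attach_inl_inl_le b a))

lemma edist_attach_inr_inr_le {i j : W} {b c : V} (hb : b ∈ A i) (hc : c ∈ A j) :
    (attach G A).edist (inr i) (inr j) ≤ 1 + G.edist b c + 1 :=
  SimpleGraph.edist_triangle.trans
    (add_le_add (edist_attach_inr_inl_le hb c) (edist_le_one_of_adj (by simpa)))

lemma three_le_edist_attach_inr_inl {i : W} {a : V} (h : ∀ b ∈ A i, 2 ≤ G.edist b a) :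
    3 ≤ (attach G A).edist (inr i) (inl a) := by
  refine (add_one_le_edist_of_forall_adj (n := 2) (by simp) ?_).trans_eq' (by norm_num)
  rintro (b | j) hy
  · simpa [two_le_edist_iff] using h b hy
  · exact absurd hy not_attach_adj_inr_inr

lemma four_le_edist_attach_inr_inr {i j : W} (hij : i ≠ j)
    (h : ∀ b ∈ A i, ∀ c ∈ A j, 2 ≤ G.edist c b) :
    4 ≤ (attach G A).edist (inr i) (inr j) := by
  refine (add_one_le_edist_of_forall_adj (n := 3) (by simpa) ?_).trans_eq' (by norm_num)
  rintro (b | l) hy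
  · rw [edist_comm]
    exact three_le_edist_attach_inr_inl (h b hy)
  · exact absurd hy not_attach_adj_inr_inr

lemma eccent_attach_inl_le (hG : ∀ a b, G.edist a b ≤ 2) (hA : ∀ i, (A i).Nonempty) (a : V) :
    (attach G A).eccent (inl a) ≤ 3 := by
  refine (eccent_le_iff _ _).mpr ?_
  rintro (b | i)
  · exact (edist_attach_inl_inl_le a b).trans ((hG a b).trans (by norm_num))
  · obtain ⟨b, hb⟩ := hA i
    rw [edist_comm]
    calc (attach G A).edist (inr i) (inl a) ≤ 1 + G.edist b a := edist_attach_inr_inl_le hb a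
      _ ≤ 1 + 2 := add_le_add le_rfl (hG b a)
      _ = 3 := by norm_num

lemma eccent_attach_inr_eq_four (hG : ∀ a b, G.edist a b ≤ 2) (hA : ∀ i, (A i).Nonempty)
    {i j : W} (hij : i ≠ j) (h : ∀ b ∈ A i, ∀ c ∈ A j, 2 ≤ G.edist c b) :
    (attach G A).eccent (inr i) = 4 := by
  refine le_antisymm ?_ ((four_le_edist_attach_inr_inr hij h).trans edist_le_eccent)
  obtain ⟨b, hb⟩ := hA i
  calc (attach G A).eccent (inr i)
      ≤ (attach G A).edist (inr i) (inl b) + (attach G A).eccent (inl b) :=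
        eccent_le_edist_add_eccent _ _
    _ ≤ 1 + 3 := add_le_add (edist_le_one_of_adj (by simpa)) (eccent_attach_inl_le hG hA b)
    _ = 4 := by norm_num

end Attach

section Construction

variable {V : Type*} {G : SimpleGraph V} {u v u' v' : V}

lemma eccent_attach_inl_eq_three (hG : ∀ a b, G.edist a b ≤ 2) (huv : G.edist u v = 2)
    (hcommon : ∀ w ∈ G.commonNeighbors u v, 2 ≤ G.edist u' w ∧ 2 ≤ G.edist v' w) (a : V) :
    (attach G ![{u}, {v}, {u', v'}]).eccent (inl a) = 3 := by
  refine le_antisymm (eccent_attach_inl_le hG (by simp [Fin.forall_fin_succ]) a) ?_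
  suffices ∃ i, ∀ b ∈ (![{u}, {v}, {u', v'}] : Fin 3 → Set V) i, 2 ≤ G.edist b a by
    obtain ⟨i, hi⟩ := this
    exact (three_le_edist_attach_inr_inl hi).trans (edist_comm.trans_le edist_le_eccent)
  by_cases hu : 2 ≤ G.edist u a
  · exact ⟨0, by simpa⟩
  by_cases hv : 2 ≤ G.edist v a
  · exact ⟨1, by simpa⟩
  obtain ⟨hne, hnadj⟩ := two_le_edist_iff.mp huv.ge
  simp only [two_le_edist_iff, not_and, not_not] at hu hv
  have hau : u ≠ a := by
    rintro rfl
    exact hnadj (hv hne.symm).symm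
  have hav : v ≠ a := by
    rintro rfl
    exact hnadj (hu hne)
  exact ⟨2, by simpa using hcommon a ⟨hu hau, hv hav⟩⟩

lemma eccent_attach_two_eq_three (hG : ∀ a b, G.edist a b ≤ 2) (huv : G.edist u v = 2)
    (hu' : G.Adj u u') (hv' : G.Adj v v')
    (hcommon : ∀ w ∈ G.commonNeighbors u v, 2 ≤ G.edist u' w ∧ 2 ≤ G.edist v' w) :
    (attach G ![{u}, {v}, {u', v'}]).eccent (inr 2) = 3 := by
  refine le_antisymm ((eccent_le_iff _ _).mpr ?_) ?_
  · rintro (b | i)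
    · exact (edist_attach_inr_inl_le (b := u') (by simp) b).trans
        (add_le_add le_rfl (hG u' b) |>.trans_eq (by norm_num))
    fin_cases i
    · exact (edist_attach_inr_inr_le (b := u') (c := u) (by simp) (by simp)).trans
        (by rw [edist_eq_one_iff_adj.mpr hu'.symm]; norm_num)
    · exact (edist_attach_inr_inr_le (b := v') (c := v) (by simp) (by simp)).trans
        (by rw [edist_eq_one_iff_adj.mpr hv'.symm]; norm_num)
    · simp
  · obtain ⟨-, -, w, hw⟩ := edist_eq_two_iff.mp huv
    exact (three_le_edist_attach_inr_inl (by simpa using hcommon w hw)).trans edist_le_eccent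

theorem isASC_three_attach (hG : ∀ a b, G.edist a b ≤ 2) (huv : G.edist u v = 2)
    (hu' : G.Adj u u') (hv' : G.Adj v v')
    (hcommon : ∀ w ∈ G.commonNeighbors u v, 2 ≤ G.edist u' w ∧ 2 ≤ G.edist v' w) :
    IsASC 3 (attach G ![{u}, {v}, {u', v'}]) := by
  have hA : ∀ i, (![{u}, {v}, {u', v'}] : Fin 3 → Set V) i |>.Nonempty := by
    simp [Fin.forall_fin_succ]
  have hvu : 2 ≤ G.edist v u := (SimpleGraph.edist_comm.trans huv).ge
  refine isASC_of_eccent (x := inr 0) (y := inr 1) (by simp)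
    (by rw [eccent_attach_inr_eq_four hG hA (j := 1) (by simp) (by simpa using hvu)]; norm_num)
    (by rw [eccent_attach_inr_eq_four hG hA (j := 0) (by simp) (by simpa using huv.ge)]; norm_num)
    (eccent_attach_inl_eq_three hG huv hcommon u) ?_
  rintro (a | i) h0 h1
  · exact eccent_attach_inl_eq_three hG huv hcommon a
  · fin_cases i
    · exact absurd rfl h0
    · exact absurd rfl h1
    · exact eccent_attach_two_eq_three hG huv hu' hv' hcommon

end Construction

theorem theta_three_of_two_SC_general {V : Type*} (G : SimpleGraph V)
    (hSC : ∀ u, ecc G u = 2)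
    (u v u' v' : V)
    (huv : G.edist u v = graphDiam G)
    (hu' : u' ∈ G.neighborSet u \ G.neighborSet v)
    (hv' : v' ∈ G.neighborSet v \ G.neighborSet u)
    (hsub : G.neighborSet u ∩ G.neighborSet v ⊆ eccSet G u' ∩ eccSet G v') :
    theta 3 G = 3 := by
  have hG (a b : V) : G.edist a b ≤ 2 := edist_le_eccent.trans (hSC a).le
  have huv₂ : G.edist u v = 2 := by
    have : Nonempty V := ⟨u⟩
    simp [huv, graphDiam, hSC]
  have hcommon : ∀ w ∈ G.commonNeighbors u v, 2 ≤ G.edist u' w ∧ 2 ≤ G.edist v' w := by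
    intro w hw
    obtain ⟨hu'w, hv'w⟩ := hsub hw
    exact ⟨(hu'w.trans (hSC u')).ge, (hv'w.trans (hSC v')).ge⟩
  have hthree : 3 ∈ {k : ℕ | ∃ H : SimpleGraph (V ⊕ Fin k), IsASC 3 H ∧
      ∀ a b : V, H.Adj (inl a) (inl b) ↔ G.Adj a b} :=
    ⟨_, isASC_three_attach hG huv₂ hu'.1 hv'.1 hcommon, fun _ _ => Iff.rfl⟩
  refine le_antisymm (Nat.sInf_le hthree) (le_csInf ⟨3, hthree⟩ ?_)
  rintro k ⟨H, ⟨hconn, hrad, -⟩, hind⟩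
  by_contra! hk
  have hrad₂ := radius_le_two_of_card_le_two (by omega) hG (fun h => (hind _ _).mpr h)
    hconn.preconnected u
  exact absurd (hrad.ge.trans hrad₂) (by norm_num)

/-- Let `G` be a 2-SC graph (every vertex has eccentricity 2). If `G` contains a
diametrical pair `u, v` and vertices `u' ∈ N(u) \ N(v)`, `v' ∈ N(v) \ N(u)` with
`N(u) ∩ N(v) ⊆ Ecc(u') ∩ Ecc(v')`, then `θ_3(G) = 3`. -/
theorem theta_three_of_two_SC {V : Type*} [Fintype V] (G : SimpleGraph V)
    (hSC : ∀ u, ecc G u = 2)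
    (u v u' v' : V)
    (huv : G.edist u v = graphDiam G)
    (hu' : u' ∈ G.neighborSet u \ G.neighborSet v)
    (hv' : v' ∈ G.neighborSet v \ G.neighborSet u)
    (hsub : G.neighborSet u ∩ G.neighborSet v ⊆ eccSet G u' ∩ eccSet G v') :
    theta 3 G = 3 :=
  theta_three_of_two_SC_general G hSC u v u' v' huv hu' hv' hsub

end AscPaper
end
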